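/- In the Jessen-type construction at scale n ≥ 2 on T^ω, the union C_n = ⋃_α Q_α of all principal k-cells (pairwise disjoint translated cubes Q_α = y(α) + □_{m(α),n} with disjoint sacks) satisfies m(C_n) = 1/(n+1): indeed m(C_n) = 2^{n(n−1)} · 2^{−n²} · Σ_{k=0}^∞ ((2^n − (n+1))/2^n)^k = 1/(n+1), and the complement of the union of the sacks, N_n = T^ω \ ⋃_α S(Q_α), is a null set. -/

import Mathlib

open MeasureTheory Filter Topology Pointwise

/-- The infinite torus `T^ω`, the countable product of circles `T = ℝ/ℤ`. -/
abbrev Tomega : Type := ℕ → AddCircle (1 : ℝ)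

/-- The open arc of the circle `T = ℝ/ℤ` which is the image of the interval `(a, b) ⊂ ℝ`. -/
def arc (a b : ℝ) : Set (AddCircle (1 : ℝ)) :=
  (fun t : ℝ => (t : AddCircle (1 : ℝ))) '' Set.Ioo a b

/-- The subgroup `R_k = {0, 1/k, …, (k-1)/k}` of `k`-th roots of unity in `T = ℝ/ℤ`. -/
noncomputable def Rsub (k : ℕ) : AddSubgroup (AddCircle (1 : ℝ)) :=
  AddSubgroup.zmultiples (((k : ℝ)⁻¹ : ℝ) : AddCircle (1 : ℝ))

/-- The exponent pattern of the Rubio de Francia construction: for `m = n² + j` with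
`1 ≤ j ≤ 2n+1` (so `n = Nat.sqrt (m-1)`), the `i`-th coordinate (0-indexed) of `H_m` is
`R_{2^(rdfExp m i)}` and the `i`-th edge of `V_m` is `(0, 2^{-(rdfExp m i)})`; coordinates
with exponent `0` carry the trivial subgroup `{0}`, resp. the full circle `T`. -/
def rdfExp (m i : ℕ) : ℕ :=
  let n := Nat.sqrt (m - 1)
  let j := m - n ^ 2
  if j ≤ n then (if i < n then n else if i = n then j else 0)
  else (if i < j - n then n + 1 else if i ≤ n then n else 0)

/-- The finite subgroup `H_m` of `T^ω` of the Rubio de Francia construction. -/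
noncomputable def Hgrp (m : ℕ) : AddSubgroup Tomega :=
  AddSubgroup.pi Set.univ fun i => Rsub (2 ^ rdfExp m i)

/-- The fundamental domain `V_m` for `T^ω / H_m` of the Rubio de Francia construction. -/
def Vset (m : ℕ) : Set Tomega :=
  {x | ∀ i, rdfExp m i ≠ 0 → x i ∈ arc 0 ((2 : ℝ) ^ rdfExp m i)⁻¹}

/-- The `(m,q)`-cube `□_{m,q} = (0, 2^{-m})^q × T^{q,ω}` in `T^ω`. -/
def cubeSet (m q : ℕ) : Set Tomega := {x | ∀ i < q, x i ∈ arc 0 ((2 : ℝ) ^ m)⁻¹}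

/-- The element of `T^ω` whose `j`-th coordinate is `2^{-m}` and all other coordinates `0`;
adding it realizes the translation `τ_j^m`. -/
noncomputable def tauPt (m j : ℕ) : Tomega :=
  fun i => if i = j then ((((2 : ℝ) ^ m)⁻¹ : ℝ) : AddCircle (1 : ℝ)) else 0

/-- The sack `S(Q) = Q ∪ ⋃_{j<q} τ_j^m(Q)` of a set `Q` (0-indexed coordinates `j < q`). -/
def sack (m q : ℕ) (Q : Set Tomega) : Set Tomega := Q ∪ ⋃ j < q, tauPt m j +ᵥ Q

/-- The double `(m,m)`-cube `W_{m,r} = □_{m,m} ∪ τ_r^m(□_{m,m})` (0-indexed `r < m`). -/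
def Wcube (m r : ℕ) : Set Tomega := cubeSet m m ∪ (tauPt m r +ᵥ cubeSet m m)

/-- The extended Rubio de Francia basis `ℛ*`: all translates of the fundamental domains
`V_n` together with all translates of the double cubes `W_{m,r}`. -/
def RStar : Set (Set Tomega) :=
  {S | ∃ y : Tomega, ∃ n : ℕ, 1 ≤ n ∧ S = y +ᵥ Vset n} ∪
  {S | ∃ y : Tomega, ∃ m r : ℕ, 2 ≤ m ∧ r < m ∧ S = y +ᵥ Wcube m r}

/-!
Start from the `2^{n(n-1)}` dyadic cells of edge `2^{-(n-1)}` in the first `n` coordinates.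
Halving the edges of a cell with corner index `a` gives the `2^n` children `2a + ε`,
`ε ∈ {0,1}^n`; those with `∑ ε ≤ 1` are the principal cube `2a` and its sack, the others are
subdivided again. A point with no rational coordinate (the rest is a null set) lies in an open
child at every level, so it either falls into a sack or stays in the remaining cells forever;
since at most `2^{n(n-1)} (2^n - 1)^k` cells of edge `2^{-(n-1+k)}` remain after `k` steps, the
sacks exhaust the torus up to a null set. A sack has `n + 1` times the measure of its principal
cube, so the principal cubes have total measure `1/(n+1)`.
-/

open scoped ENNReal Function Finset

noncomputable section

lemma measure_eq_zero_of_pairwise_disjoint_vadd {G α : Type*} [AddGroup G] [AddAction G α]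
    [MeasurableSpace α] [MeasurableConstVAdd G α] (μ : Measure α) [IsFiniteMeasure μ]
    [VAddInvariantMeasure G α μ] {s : Set α} (hs : MeasurableSet s) (g : ℕ → G)
    (hg : Pairwise (Disjoint on fun k => g k +ᵥ s)) : μ s = 0 := by
  by_contra h
  apply (measure_lt_top μ (⋃ k, g k +ᵥ s)).ne
  rw [measure_iUnion hg fun k => hs.const_vadd (g k)]
  simpa using ENNReal.tsum_const_eq_top_of_ne_zero (α := ℕ) h

lemma measure_iUnion_eq_inv_of_measure_eq_mul {α ι : Type*} [MeasurableSpace α] [Countable ι]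
    {μ : Measure α} [IsProbabilityMeasure μ] {S C : ι → Set α} {c : ℝ≥0∞}
    (hS : Pairwise (Disjoint on S)) (hSm : ∀ i, MeasurableSet (S i))
    (hC : ∀ i, C i ⊆ S i) (hCm : ∀ i, MeasurableSet (C i))
    (hSC : ∀ i, μ (S i) = c * μ (C i)) (hfull : μ (⋃ i, S i)ᶜ = 0) :
    μ (⋃ i, C i) = c⁻¹ := by
  rw [prob_compl_eq_zero_iff (.iUnion hSm), measure_iUnion hS hSm] at hfull
  rw [measure_iUnion (fun i j h => (hS h).mono (hC i) (hC j)) hCm]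
  refine ENNReal.eq_inv_of_mul_eq_one_left ?_
  rw [mul_comm, ← ENNReal.tsum_mul_left, ← hfull]
  exact tsum_congr fun i => (hSC i).symm

lemma sum_le_one_iff_eq_zero_or_eq_single {ι : Type*} [Fintype ι] [DecidableEq ι] {f : ι → ℕ} :
    ∑ i, f i ≤ 1 ↔ f = 0 ∨ ∃ j, f = Pi.single j 1 := by
  refine ⟨fun h => or_iff_not_imp_left.mpr fun hf => ?_, ?_⟩
  · obtain ⟨j, hj⟩ := Function.ne_iff.mp hf
    rw [Pi.zero_apply] at hj
    rw [← Finset.add_sum_erase _ _ (Finset.mem_univ j)] at h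
    refine ⟨j, funext fun i => ?_⟩
    rcases eq_or_ne i j with rfl | hij
    · rw [Pi.single_eq_same]
      omega
    · have := Finset.single_le_sum (f := f) (fun _ _ => Nat.zero_le _)
        (Finset.mem_erase.mpr ⟨hij, Finset.mem_univ i⟩)
      rw [Pi.single_eq_of_ne hij]
      omega
  · rintro (rfl | ⟨j, rfl⟩) <;> simp

def circleRep (x : AddCircle (1 : ℝ)) : ℝ := AddCircle.equivIco 1 0 x

lemma circleRep_mem (x : AddCircle (1 : ℝ)) : circleRep x ∈ Set.Ico (0 : ℝ) 1 := by
  simpa [circleRep] using (AddCircle.equivIco 1 0 x).2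

@[simp]
lemma coe_circleRep (x : AddCircle (1 : ℝ)) : (circleRep x : AddCircle (1 : ℝ)) = x :=
  AddCircle.coe_equivIco

lemma circleRep_coe {t : ℝ} (ht : t ∈ Set.Ico (0 : ℝ) 1) : circleRep t = t :=
  AddCircle.equivIco_coe_of_mem (by simpa using ht)

lemma isOpen_arc (a b : ℝ) : IsOpen (arc a b) :=
  QuotientAddGroup.isOpenMap_coe _ isOpen_Ioo

lemma vadd_arc (c a b : ℝ) : (c : AddCircle (1 : ℝ)) +ᵥ arc a b = arc (c + a) (c + b) := by
  rw [arc, arc, ← Set.image_vadd, Set.image_image, ← Set.image_const_add_Ioo, Set.image_image]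
  simp

lemma mem_arc_iff {a b : ℝ} (ha : 0 ≤ a) (hb : b ≤ 1) {x : AddCircle (1 : ℝ)} :
    x ∈ arc a b ↔ circleRep x ∈ Set.Ioo a b := by
  constructor
  · rintro ⟨t, ht, rfl⟩
    rwa [circleRep_coe ⟨ha.trans ht.1.le, ht.2.trans_le hb⟩]
  · exact fun h => ⟨circleRep x, h, coe_circleRep x⟩

lemma disjoint_arc {a b c d : ℝ} (ha : 0 ≤ a) (hbc : b ≤ c) (hcd : c ≤ d) (hd : d ≤ 1) :
    Disjoint (arc a b) (arc c d) := by
  rw [Set.disjoint_left]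
  intro x hab hcd'
  rw [mem_arc_iff ha (by linarith)] at hab
  rw [mem_arc_iff (by linarith [hab.1, hab.2]) hd] at hcd'
  linarith [hab.2, hcd'.1]

lemma measurableSet_cubeSet (m q : ℕ) : MeasurableSet (cubeSet m q) := by
  have : cubeSet m q = ⋂ i, ⋂ (_ : i < q), (fun x : Tomega => x i) ⁻¹' arc 0 ((2 : ℝ) ^ m)⁻¹ := by
    ext x; simp [cubeSet]
  rw [this]
  exact .iInter fun i => .iInter fun _ =>
    (isOpen_arc _ _).measurableSet.preimage (measurable_pi_apply i)

lemma measurableSet_sack {m q : ℕ} {Q : Set Tomega} (hQ : MeasurableSet Q) :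
    MeasurableSet (sack m q Q) :=
  hQ.union (.iUnion fun _ => .iUnion fun _ => hQ.const_vadd _)

lemma apply_mem_of_mem_tauPt_vadd_cubeSet {m q j i : ℕ} (hi : i < q) {x : Tomega}
    (hx : x ∈ tauPt m j +ᵥ cubeSet m q) :
    x i ∈ if i = j then arc ((2 : ℝ) ^ m)⁻¹ (((2 : ℝ) ^ m)⁻¹ + ((2 : ℝ) ^ m)⁻¹)
      else arc 0 ((2 : ℝ) ^ m)⁻¹ := by
  obtain ⟨z, hz, rfl⟩ := hx
  split_ifs with hij
  · subst hij
    have := vadd_arc ((2 : ℝ) ^ m)⁻¹ 0 ((2 : ℝ) ^ m)⁻¹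
    rw [add_zero] at this
    rw [← this]
    exact ⟨z i, hz i hi, by simp [tauPt]⟩
  · simpa [tauPt, hij] using hz i hi

lemma measure_sack_cubeSet (μ : Measure Tomega) [μ.IsAddLeftInvariant] {m : ℕ}
    (hm : 1 ≤ m) (q : ℕ) :
    μ (sack m q (cubeSet m q)) = (q + 1) * μ (cubeSet m q) := by
  set δ : ℝ := ((2 : ℝ) ^ m)⁻¹
  have hδ : δ + δ ≤ 1 := by
    have : (2 : ℝ) ≤ 2 ^ m := by simpa using pow_le_pow_right₀ (by norm_num : (1 : ℝ) ≤ 2) hm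
    have : δ ≤ 2⁻¹ := inv_anti₀ (by norm_num) this
    linarith
  have hlow : Disjoint (arc 0 δ) (arc δ (δ + δ)) :=
    disjoint_arc le_rfl le_rfl (by simp [δ]) hδ
  have hcube : ∀ j < q, Disjoint (cubeSet m q) (tauPt m j +ᵥ cubeSet m q) := fun j hj =>
    Set.disjoint_left.mpr fun x hx hx' => by
      have := apply_mem_of_mem_tauPt_vadd_cubeSet hj hx'
      rw [if_pos rfl] at this
      exact Set.disjoint_left.mp hlow (hx j hj) this
  have htau : (↑(Finset.range q) : Set ℕ).PairwiseDisjoint fun j => tauPt m j +ᵥ cubeSet m q := by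
    intro j hj j' hj' hne
    refine Set.disjoint_left.mpr fun x hx hx' => ?_
    have h1 := apply_mem_of_mem_tauPt_vadd_cubeSet (Finset.mem_range.mp hj) hx
    have h2 := apply_mem_of_mem_tauPt_vadd_cubeSet (Finset.mem_range.mp hj) hx'
    rw [if_pos rfl] at h1
    rw [if_neg hne] at h2
    exact Set.disjoint_left.mp hlow h2 h1
  have hunion : (⋃ j < q, tauPt m j +ᵥ cubeSet m q) =
      ⋃ j ∈ Finset.range q, tauPt m j +ᵥ cubeSet m q := by
    simp only [Finset.mem_range]
  have hmeas := measurableSet_cubeSet m q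
  rw [sack, hunion, measure_union _ (Finset.measurableSet_biUnion _ fun j _ => hmeas.const_vadd _),
    measure_biUnion_finset htau fun j _ => hmeas.const_vadd _]
  · simp only [measure_vadd, Finset.sum_const, Finset.card_range, nsmul_eq_mul]
    ring
  · exact Set.disjoint_iUnion₂_right.mpr fun j hj => hcube j (Finset.mem_range.mp hj)

lemma measure_setOf_apply_eq (μ : Measure Tomega) [IsFiniteMeasure μ] [μ.IsAddLeftInvariant]
    (i : ℕ) (c : AddCircle (1 : ℝ)) : μ {x : Tomega | x i = c} = 0 := by
  set t : ℕ → ℝ := fun k => ((k : ℝ) + 2)⁻¹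
  have ht : ∀ k, t k ∈ Set.Ico (0 : ℝ) 1 := fun k =>
    ⟨by positivity, inv_lt_one_of_one_lt₀ (by linarith [(k.cast_nonneg : (0 : ℝ) ≤ k)])⟩
  have hvadd : ∀ k, (Pi.single i (t k : AddCircle (1 : ℝ)) : Tomega) +ᵥ {x : Tomega | x i = c} =
      {x | x i = t k + c} := fun k => by
    ext x
    simp [Set.mem_vadd_set_iff_neg_vadd_mem, neg_add_eq_iff_eq_add]
  refine measure_eq_zero_of_pairwise_disjoint_vadd (G := Tomega) μ
    ((measurableSet_singleton c).preimage (measurable_pi_apply i))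
    (fun k => Pi.single i (t k : AddCircle (1 : ℝ))) fun k l hkl => ?_
  simp only [Function.onFun, hvadd]
  refine Set.disjoint_left.mpr fun x hk hl => hkl ?_
  have hk : x i = t k + c := hk
  have := congrArg circleRep (add_right_cancel (hk.symm.trans hl))
  rw [circleRep_coe (ht k), circleRep_coe (ht l)] at this
  simpa [t] using this

-- Off this null set no coordinate is a dyadic rational, so at every level a point lies in the open
-- dyadic cube indexed by the floors of its coordinates.
def gridSet : Set Tomega := ⋃ (i : ℕ) (q : ℚ), {x : Tomega | x i = ((q : ℝ) : AddCircle (1 : ℝ))}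

lemma measure_gridSet (μ : Measure Tomega) [IsFiniteMeasure μ] [μ.IsAddLeftInvariant] :
    μ gridSet = 0 := by
  simp [gridSet, measure_iUnion_null_iff, measure_setOf_apply_eq]

def gridPt (n M : ℕ) (c : Fin n → ℕ) : Tomega :=
  fun i => if h : i < n then (((c ⟨i, h⟩ : ℝ) / 2 ^ M : ℝ) : AddCircle (1 : ℝ)) else 0

def dyadicCube (n M : ℕ) (c : Fin n → ℕ) : Set Tomega := gridPt n M c +ᵥ cubeSet M n

lemma mem_dyadicCube_iff {n M : ℕ} {c : Fin n → ℕ} (hc : ∀ i, c i < 2 ^ M) {x : Tomega} :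
    x ∈ dyadicCube n M c ↔ ∀ i : Fin n, circleRep (x i) * 2 ^ M ∈ Set.Ioo (c i : ℝ) (c i + 1) := by
  have h2M : (0 : ℝ) < 2 ^ M := by positivity
  have hcoord : ∀ i : Fin n, (-gridPt n M c + x) i ∈ arc 0 ((2 : ℝ) ^ M)⁻¹ ↔
      circleRep (x i) * 2 ^ M ∈ Set.Ioo (c i : ℝ) (c i + 1) := fun i => by
    have hci : ((c i : ℝ) + 1) ≤ 2 ^ M := by exact_mod_cast hc i
    have hend : (c i : ℝ) / 2 ^ M + (2 ^ M)⁻¹ = (c i + 1) / 2 ^ M := by ring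
    rw [Pi.add_apply, Pi.neg_apply, ← vadd_eq_add, ← Set.mem_vadd_set_iff_neg_vadd_mem,
      gridPt, dif_pos i.isLt, Fin.eta, vadd_arc, add_zero, hend,
      mem_arc_iff (by positivity) ((div_le_one h2M).mpr hci)]
    simp only [Set.mem_Ioo, div_lt_iff₀ h2M, lt_div_iff₀ h2M]
  rw [dyadicCube, Set.mem_vadd_set_iff_neg_vadd_mem, ← forall_congr' hcoord]
  exact ⟨fun h i => h i i.isLt, fun h i hi => h ⟨i, hi⟩⟩

def dyadicIdx (n M : ℕ) (x : Tomega) : Fin n → ℕ := fun i => ⌊circleRep (x i) * 2 ^ M⌋₊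

lemma dyadicIdx_lt (n M : ℕ) (x : Tomega) (i : Fin n) : dyadicIdx n M x i < 2 ^ M := by
  obtain ⟨h0, h1⟩ := circleRep_mem (x i)
  rw [dyadicIdx, Nat.floor_lt (by positivity)]
  push_cast
  nlinarith [pow_pos (two_pos : (0 : ℝ) < 2) M]

lemma dyadicIdx_succ_div_two (n M : ℕ) (x : Tomega) (i : Fin n) :
    dyadicIdx n (M + 1) x i / 2 = dyadicIdx n M x i := by
  rw [dyadicIdx, dyadicIdx, ← Nat.floor_div_ofNat, pow_succ, ← mul_assoc,
    mul_div_cancel_right₀ _ two_ne_zero]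

lemma dyadicIdx_of_mem_dyadicCube {n M : ℕ} {c : Fin n → ℕ} (hc : ∀ i, c i < 2 ^ M) {x : Tomega}
    (hx : x ∈ dyadicCube n M c) : dyadicIdx n M x = c := by
  rw [mem_dyadicCube_iff hc] at hx
  funext i
  exact Nat.floor_eq_iff (by linarith [(hx i).1, (c i).cast_nonneg (α := ℝ)]) |>.mpr
    ⟨(hx i).1.le, (hx i).2⟩

lemma mem_dyadicCube_dyadicIdx {n M : ℕ} {x : Tomega} (hx : x ∉ gridSet) :
    x ∈ dyadicCube n M (dyadicIdx n M x) := by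
  rw [mem_dyadicCube_iff (dyadicIdx_lt n M x)]
  intro i
  have h0 : 0 ≤ circleRep (x i) * 2 ^ M := mul_nonneg (circleRep_mem _).1 (by positivity)
  refine ⟨(Nat.floor_le h0).lt_of_ne fun h => hx ?_, Nat.lt_floor_add_one _⟩
  refine Set.mem_iUnion₂.mpr ⟨i, (⌊circleRep (x i) * 2 ^ M⌋₊ : ℚ) / 2 ^ M, ?_⟩
  have hq : (((⌊circleRep (x i) * 2 ^ M⌋₊ : ℚ) / 2 ^ M : ℚ) : ℝ) = circleRep (x i) := by
    push_cast
    rw [show (⌊circleRep (x i) * 2 ^ M⌋₊ : ℝ) = _ from h, mul_div_cancel_right₀ _ (by positivity)]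
  change x i = _
  rw [hq, coe_circleRep]

lemma measure_cubeSet_le (μ : Measure Tomega) [IsProbabilityMeasure μ] [μ.IsAddLeftInvariant]
    (M n : ℕ) : μ (cubeSet M n) ≤ (2 ^ (M * n))⁻¹ := by
  set s := Fintype.piFinset fun _ : Fin n => Finset.range (2 ^ M)
  have hbound : ∀ c ∈ s, ∀ i, c i < 2 ^ M := fun c hc i => by
    simpa using Fintype.mem_piFinset.mp hc i
  have hdisj : (s : Set (Fin n → ℕ)).PairwiseDisjoint (dyadicCube n M) := fun c hc c' hc' hne =>
    Set.disjoint_left.mpr fun x hx hx' => hne <|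
      (dyadicIdx_of_mem_dyadicCube (hbound c hc) hx).symm.trans
        (dyadicIdx_of_mem_dyadicCube (hbound c' hc') hx')
  have hsum : ∑ c ∈ s, μ (dyadicCube n M c) ≤ 1 := by
    rw [← measure_biUnion_finset hdisj fun c _ => (measurableSet_cubeSet M n).const_vadd _]
    exact prob_le_one
  simp only [dyadicCube, measure_vadd, Finset.sum_const, nsmul_eq_mul, s,
    Fintype.card_piFinset, Finset.card_range, Finset.prod_const, Finset.card_univ,
    Fintype.card_fin] at hsum
  rw [ENNReal.le_inv_iff_mul_le, mul_comm, pow_mul]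
  exact_mod_cast hsum

lemma gridPt_add_tauPt {n M : ℕ} (c : Fin n → ℕ) (j : Fin n) :
    gridPt n M c + tauPt M j = gridPt n M (c + Pi.single j 1) := by
  funext i
  by_cases hi : i < n
  · by_cases hij : i = j
    · subst hij
      simp only [Pi.add_apply, gridPt, tauPt, dif_pos hi, Fin.eta, if_true, Pi.single_eq_same]
      rw [← AddCircle.coe_add]
      push_cast
      ring_nf
    · have hij' : (⟨i, hi⟩ : Fin n) ≠ j := fun h => hij (congrArg Fin.val h)
      simp [gridPt, tauPt, hi, hij, hij']
  · simp [gridPt, tauPt, hi, show i ≠ j from fun h => hi (h ▸ j.isLt)]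

lemma gridPt_vadd_sack {n M : ℕ} (c : Fin n → ℕ) :
    gridPt n M c +ᵥ sack M n (cubeSet M n) =
      dyadicCube n M c ∪ ⋃ j : Fin n, dyadicCube n M (c + Pi.single j 1) := by
  rw [sack, Set.vadd_set_union, Set.vadd_set_iUnion₂]
  congr 1
  ext x
  simp only [Set.mem_iUnion, dyadicCube, ← gridPt_add_tauPt, ← vadd_vadd]
  exact ⟨fun ⟨j, hj, h⟩ => ⟨⟨j, hj⟩, h⟩, fun ⟨j, h⟩ => ⟨j, j.isLt, h⟩⟩

namespace Jessen

def subdividedOffsets (n : ℕ) : Finset (Fin n → ℕ) :=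
  (Fintype.piFinset fun _ => Finset.range 2).filter fun ε => 2 ≤ ∑ i, ε i

-- Corner indices `a` of the cells `dyadicCube n (L + k) a` still to be subdivided after `k` steps;
-- the children of `a` are the cells `2a + ε` of the next level, `ε ∈ {0,1}^n`.
def remaining (n L : ℕ) : ℕ → Finset (Fin n → ℕ)
  | 0 => Fintype.piFinset fun _ => Finset.range (2 ^ L)
  | k + 1 => (remaining n L k ×ˢ subdividedOffsets n).image fun p => 2 * p.1 + p.2

variable {n L : ℕ}

lemma two_mul_add_apply_div_two {a ε : Fin n → ℕ} {i : Fin n} (hε : ε i < 2) :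
    (2 * a + ε) i / 2 = a i := by
  simp only [Pi.add_apply, Pi.mul_apply, Pi.ofNat_apply]
  omega

lemma two_mul_add_apply_mod_two {a ε : Fin n → ℕ} {i : Fin n} (hε : ε i < 2) :
    (2 * a + ε) i % 2 = ε i := by
  simp only [Pi.add_apply, Pi.mul_apply, Pi.ofNat_apply]
  omega

lemma mem_remaining_succ {k : ℕ} {c : Fin n → ℕ} :
    c ∈ remaining n L (k + 1) ↔ (fun i => c i / 2) ∈ remaining n L k ∧ 2 ≤ ∑ i, c i % 2 := by
  simp only [remaining, subdividedOffsets, Finset.mem_image, Finset.mem_product, Finset.mem_filter,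
    Fintype.mem_piFinset, Finset.mem_range, Prod.exists]
  constructor
  · rintro ⟨a, ε, ⟨ha, hε, hsum⟩, rfl⟩
    have hdiv : (fun i => (2 * a + ε) i / 2) = a :=
      funext fun i => two_mul_add_apply_div_two (hε i)
    exact ⟨by rwa [hdiv], by rwa [Finset.sum_congr rfl fun i _ => two_mul_add_apply_mod_two (hε i)]⟩
  · rintro ⟨ha, hsum⟩
    exact ⟨_, fun i => c i % 2, ⟨ha, fun i => Nat.mod_lt _ two_pos, hsum⟩,
      funext fun i => by
        simp only [Pi.add_apply, Pi.mul_apply, Pi.ofNat_apply]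
        omega⟩

lemma lt_of_mem_remaining {k : ℕ} {a : Fin n → ℕ} (ha : a ∈ remaining n L k) (i : Fin n) :
    a i < 2 ^ (L + k) := by
  induction k generalizing a with
  | zero => simpa [remaining] using Fintype.mem_piFinset.mp ha i
  | succ k ih =>
    have := ih (mem_remaining_succ.mp ha).1
    rw [← add_assoc, pow_succ]
    omega

lemma card_subdividedOffsets_le (n : ℕ) : #(subdividedOffsets n) ≤ 2 ^ n - 1 := by
  have hsub : subdividedOffsets n ⊆ (Fintype.piFinset fun _ : Fin n => Finset.range 2).erase 0 :=
    fun ε hε => by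
      simp only [subdividedOffsets, Finset.mem_filter] at hε
      exact Finset.mem_erase.mpr ⟨by rintro rfl; simp at hε, hε.1⟩
  simpa [Finset.card_erase_of_mem] using Finset.card_le_card hsub

lemma card_remaining_le (k : ℕ) : #(remaining n L k) ≤ 2 ^ (L * n) * (2 ^ n - 1) ^ k := by
  induction k with
  | zero => simp [remaining, pow_mul]
  | succ k ih =>
    calc #(remaining n L (k + 1)) ≤ #(remaining n L k) * #(subdividedOffsets n) :=
          Finset.card_image_le.trans (Finset.card_product _ _).le
      _ ≤ 2 ^ (L * n) * (2 ^ n - 1) ^ k * (2 ^ n - 1) :=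
          Nat.mul_le_mul ih (card_subdividedOffsets_le n)
      _ = 2 ^ (L * n) * (2 ^ n - 1) ^ (k + 1) := by ring

lemma remaining_nonempty (hn : 2 ≤ n) (k : ℕ) : (remaining n L k).Nonempty := by
  induction k with
  | zero => exact ⟨0, by simp [remaining]⟩
  | succ k ih =>
    obtain ⟨a, ha⟩ := ih
    refine ⟨fun i => 2 * a i + 1, mem_remaining_succ.mpr ⟨?_, ?_⟩⟩
    · simpa [Nat.add_div_of_dvd_right] using ha
    · simpa using hn

-- `⟨k, a⟩` labels the principal cube `2a` of level `L + k + 1` inside the remaining cell `a`.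
variable (n L) in
abbrev Index : Type := (k : ℕ) × remaining n L k

lemma infinite_index (hn : 2 ≤ n) : Infinite (Index n L) :=
  Infinite.of_injective
    (fun k => ⟨k, (remaining_nonempty hn k).choose, (remaining_nonempty hn k).choose_spec⟩)
    fun _ _ h => congrArg Sigma.fst h

def level (j : Index n L) : ℕ := L + j.1 + 1

def corner (j : Index n L) : Tomega := gridPt n (level j) (2 * j.2)

def principalCube (j : Index n L) : Set Tomega := corner j +ᵥ cubeSet (level j) n

def sackOf (j : Index n L) : Set Tomega := corner j +ᵥ sack (level j) n (cubeSet (level j) n)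

variable (n L) in
def remSet (k : ℕ) : Set Tomega := {x | dyadicIdx n (L + k) x ∈ remaining n L k}

lemma mem_sackOf {j : Index n L} {x : Tomega} :
    x ∈ sackOf j ↔ ∃ ε : Fin n → ℕ, ∑ i, ε i ≤ 1 ∧ x ∈ dyadicCube n (level j) (2 * j.2 + ε) := by
  simp only [sackOf, corner, gridPt_vadd_sack, Set.mem_union, Set.mem_iUnion,
    sum_le_one_iff_eq_zero_or_eq_single]
  constructor
  · rintro (h | ⟨i, h⟩)
    · exact ⟨0, .inl rfl, by simpa using h⟩
    · exact ⟨_, .inr ⟨i, rfl⟩, h⟩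
  · rintro ⟨ε, (rfl | ⟨i, rfl⟩), h⟩
    · exact .inl (by simpa using h)
    · exact .inr ⟨i, h⟩

lemma sackOf_subset (j : Index n L) :
    sackOf j ⊆ {x | dyadicIdx n (L + j.1) x = j.2} \ remSet n L (j.1 + 1) := by
  intro x hx
  obtain ⟨ε, hε, hx⟩ := mem_sackOf.mp hx
  have hεi : ∀ i, ε i < 2 := fun i => Nat.lt_succ_of_le <|
    (Finset.single_le_sum (fun _ _ => Nat.zero_le _) (Finset.mem_univ i)).trans hε
  have hc : ∀ i, (2 * j.2 + ε : Fin n → ℕ) i < 2 ^ level j := fun i => by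
    have := lt_of_mem_remaining j.2.2 i
    have := hεi i
    simp only [level, Pi.add_apply, Pi.mul_apply, Pi.ofNat_apply, pow_succ]
    omega
  have hidx : dyadicIdx n (L + j.1 + 1) x = 2 * j.2 + ε := dyadicIdx_of_mem_dyadicCube hc hx
  refine ⟨funext fun i => ?_, fun hrem => ?_⟩
  · rw [← dyadicIdx_succ_div_two, hidx, two_mul_add_apply_div_two (hεi i)]
  · have := (mem_remaining_succ.mp hrem).2
    rw [← add_assoc, hidx,
      Finset.sum_congr rfl fun i _ => two_mul_add_apply_mod_two (hεi i)] at this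
    exact absurd (this.trans hε) (by norm_num)

lemma remSet_antitone : Antitone (remSet n L) := by
  refine antitone_nat_of_succ_le fun k x hx => ?_
  have := (mem_remaining_succ.mp hx).1
  simp only [← add_assoc, dyadicIdx_succ_div_two] at this
  exact this

lemma pairwise_disjoint_sackOf : Pairwise (Disjoint on sackOf (n := n) (L := L)) := by
  have key : ∀ j j' : Index n L, j.1 < j'.1 → Disjoint (sackOf j) (sackOf j') := fun j j' h =>
    Set.disjoint_left.mpr fun x hx hx' =>
      have hidx : dyadicIdx n (L + j'.1) x = j'.2 := (sackOf_subset j' hx').1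
      (sackOf_subset j hx).2 <| remSet_antitone h <| by
        show dyadicIdx n (L + j'.1) x ∈ remaining n L j'.1
        exact hidx ▸ j'.2.2
  rintro ⟨k, a⟩ ⟨l, b⟩ hne
  rcases lt_trichotomy k l with h | rfl | h
  · exact key _ _ h
  · have hab : a ≠ b := fun h => hne (h ▸ rfl)
    exact Set.disjoint_left.mpr fun x hx hx' => hab <| Subtype.ext <|
      (sackOf_subset _ hx).1.symm.trans (sackOf_subset _ hx').1
  · exact (key _ _ h).symm

lemma compl_iUnion_sackOf_subset (k : ℕ) :
    (⋃ j : Index n L, sackOf j)ᶜ ⊆ remSet n L k ∪ gridSet := by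
  intro x hx
  by_cases hgrid : x ∈ gridSet
  · exact .inr hgrid
  refine .inl ?_
  induction k with
  | zero => simpa [remSet, remaining] using dyadicIdx_lt n L x
  | succ k ih =>
    set c := dyadicIdx n (L + (k + 1)) x
    have hdiv : (fun i => c i / 2) = dyadicIdx n (L + k) x :=
      funext (dyadicIdx_succ_div_two n (L + k) x)
    by_contra hc
    have hsum : ∑ i, c i % 2 ≤ 1 := by
      by_contra! h
      exact hc (mem_remaining_succ.mpr ⟨hdiv ▸ ih, h⟩)
    have hsplit : 2 * dyadicIdx n (L + k) x + (fun i => c i % 2) = c := by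
      funext i
      simp only [Pi.add_apply, Pi.mul_apply, Pi.ofNat_apply, ← hdiv]
      omega
    refine hx (Set.mem_iUnion.mpr ⟨⟨k, _, ih⟩, mem_sackOf.mpr ⟨fun i => c i % 2, hsum, ?_⟩⟩)
    have hmem : x ∈ dyadicCube n (L + (k + 1)) c := mem_dyadicCube_dyadicIdx hgrid
    rwa [← hsplit] at hmem

section Measure

variable (μ : Measure Tomega) [IsProbabilityMeasure μ] [μ.IsAddLeftInvariant]

lemma measure_remSet_le (k : ℕ) :
    μ (remSet n L k) ≤ (((2 ^ n - 1 : ℕ) : ℝ≥0∞) / 2 ^ n) ^ k := by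
  have hsub : remSet n L k ⊆ (⋃ a ∈ remaining n L k, dyadicCube n (L + k) a) ∪ gridSet :=
    fun x hx => by
      by_cases hgrid : x ∈ gridSet
      · exact .inr hgrid
      · exact .inl (Set.mem_biUnion hx (mem_dyadicCube_dyadicIdx hgrid))
  have h0 : (2 : ℝ≥0∞) ^ (L * n) ≠ 0 := by positivity
  have htop : (2 : ℝ≥0∞) ^ (L * n) ≠ ⊤ := by simp
  have hsplit : (2 : ℝ≥0∞) ^ ((L + k) * n) = 2 ^ (L * n) * (2 ^ n) ^ k := by
    rw [← pow_mul, ← pow_add]; ring_nf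
  calc μ (remSet n L k)
      ≤ ∑ a ∈ remaining n L k, μ (dyadicCube n (L + k) a) + μ gridSet :=
        (measure_mono hsub).trans <| (measure_union_le _ _).trans <|
          add_le_add_left (measure_biUnion_finset_le _ _) _
    _ = #(remaining n L k) * μ (cubeSet (L + k) n) := by
        simp [dyadicCube, measure_gridSet]
    _ ≤ ((2 ^ (L * n) * (2 ^ n - 1) ^ k : ℕ) : ℝ≥0∞) * (2 ^ ((L + k) * n))⁻¹ :=
        mul_le_mul' (by exact_mod_cast card_remaining_le k) (measure_cubeSet_le μ _ _)
    _ = _ := by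
        rw [hsplit, ENNReal.mul_inv (.inl h0) (.inl htop), div_eq_mul_inv, mul_pow,
          ← ENNReal.inv_pow, Nat.cast_mul, Nat.cast_pow, Nat.cast_pow, Nat.cast_ofNat,
          mul_mul_mul_comm, ENNReal.mul_inv_cancel h0 htop, one_mul]

lemma measure_compl_iUnion_sackOf : μ (⋃ j : Index n L, sackOf j)ᶜ = 0 := by
  have hq : ((2 ^ n - 1 : ℕ) : ℝ≥0∞) / 2 ^ n < 1 := by
    rw [ENNReal.div_lt_iff (.inl (by positivity)) (.inl (by simp)), one_mul]
    exact_mod_cast Nat.sub_lt (by positivity) one_pos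
  refine le_antisymm (ge_of_tendsto' (ENNReal.tendsto_pow_atTop_nhds_zero_of_lt_one hq)
    fun k => ?_) zero_le
  calc μ (⋃ j : Index n L, sackOf j)ᶜ ≤ μ (remSet n L k) + μ gridSet :=
        (measure_mono (compl_iUnion_sackOf_subset k)).trans (measure_union_le _ _)
    _ ≤ _ := by rw [measure_gridSet, add_zero]; exact measure_remSet_le μ k

lemma measure_sackOf (j : Index n L) : μ (sackOf j) = (n + 1) * μ (principalCube j) := by
  rw [sackOf, principalCube, measure_vadd, measure_vadd, measure_sack_cubeSet μ (by simp [level])]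

end Measure

lemma measurableSet_principalCube (j : Index n L) : MeasurableSet (principalCube j) :=
  (measurableSet_cubeSet _ _).const_vadd _

lemma measurableSet_sackOf (j : Index n L) : MeasurableSet (sackOf j) :=
  (measurableSet_sack (measurableSet_cubeSet _ _)).const_vadd _

lemma principalCube_subset_sackOf (j : Index n L) : principalCube j ⊆ sackOf j :=
  Set.vadd_set_mono Set.subset_union_left

end Jessen

lemma Jessen.tsum_geometric_mul_eq_one_div (n : ℕ) :
    (∑' k : ℕ, (((2 : ℝ) ^ n - (n + 1)) / 2 ^ n) ^ k) *
        ((2 : ℝ) ^ (n * (n - 1)) / 2 ^ (n ^ 2)) = 1 / (n + 1) := by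
  have h2n : (0 : ℝ) < 2 ^ n := by positivity
  have hn1 : (n : ℝ) + 1 ≤ 2 ^ n := by exact_mod_cast Nat.lt_two_pow_self
  have hpow : (2 : ℝ) ^ (n ^ 2) = 2 ^ (n * (n - 1)) * 2 ^ n := by
    rw [← pow_add]
    congr 1
    cases n <;> simp [sq, Nat.mul_succ]
  rw [tsum_geometric_of_lt_one (div_nonneg (by linarith) h2n.le)
    ((div_lt_one h2n).mpr (by linarith)), hpow]
  field_simp
  ring

end

/-- **Jessen-type construction at scale `n ≥ 2`.** There is a countable family of pairwise
disjoint translated cubes `Q_k = y k + □_{M k, n}` (with `M k ≥ n`) whose sacks are also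
pairwise disjoint, such that the union `C_n = ⋃ Q_k` has measure `1/(n+1)` and the complement
`N_n` of the union of the sacks is a null set; moreover the geometric series of the
construction gives `2^{n(n−1)} · 2^{−n²} · ∑_k ((2^n − (n+1))/2^n)^k = 1/(n+1)`. -/
theorem jessen_construction (μ : Measure Tomega) [μ.IsAddHaarMeasure]
    [IsProbabilityMeasure μ] (n : ℕ) (hn : 2 ≤ n) :
    (∃ (y : ℕ → Tomega) (M : ℕ → ℕ),
      (∀ k, n ≤ M k) ∧
      (Pairwise fun k l => Disjoint (y k +ᵥ sack (M k) n (cubeSet (M k) n))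
        (y l +ᵥ sack (M l) n (cubeSet (M l) n))) ∧
      μ (⋃ k, y k +ᵥ cubeSet (M k) n) = ((n : ENNReal) + 1)⁻¹ ∧
      μ (⋃ k, y k +ᵥ sack (M k) n (cubeSet (M k) n))ᶜ = 0) ∧
    (∑' k : ℕ, (((2 : ℝ) ^ n - (n + 1)) / 2 ^ n) ^ k) *
        ((2 : ℝ) ^ (n * (n - 1)) / 2 ^ (n ^ 2)) = 1 / (n + 1) := by
  have := Jessen.infinite_index (L := n - 1) hn
  obtain ⟨e⟩ : Nonempty (ℕ ≃ Jessen.Index n (n - 1)) := nonempty_equiv_of_countable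
  have hfull := Jessen.measure_compl_iUnion_sackOf (n := n) (L := n - 1) μ
  have hcubes : μ (⋃ j, Jessen.principalCube j) = ((n : ℝ≥0∞) + 1)⁻¹ :=
    measure_iUnion_eq_inv_of_measure_eq_mul Jessen.pairwise_disjoint_sackOf
      Jessen.measurableSet_sackOf Jessen.principalCube_subset_sackOf
      Jessen.measurableSet_principalCube (Jessen.measure_sackOf μ) hfull
  rw [← e.surjective.iUnion_comp] at hcubes hfull
  refine ⟨⟨fun k => Jessen.corner (e k), fun k => Jessen.level (e k), fun k => ?_,
    fun k l hkl => Jessen.pairwise_disjoint_sackOf (e.injective.ne hkl), hcubes, hfull⟩,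
    Jessen.tsum_geometric_mul_eq_one_div n⟩
  simp only [Jessen.level]
  omega
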